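/- arXiv:2307.13730 — 4 statements merged into one kernel-verified Lean document; each statement's English description precedes it below -/
import Mathlib

section
/- Let G be a connected graph on n vertices with girth at least c·log n (for some constant c > 0) whose cycle space is nontrivial, and let B be any cycle basis of G. If G has bounded degree, then the total length of the cycles in B is Ω(n log n), and consequently some edge of G belongs to Ω(log n) cycles of B. -/
/-- `x : Sym2 V → ZMod 2` is the edge-indicator vector of a cycle of `G`. -/
def IsCycleVec {V : Type*} [DecidableEq V] (G : SimpleGraph V) (x : Sym2 V → ZMod 2) : Prop :=
  ∃ (v : V) (w : G.Walk v v), w.IsCycle ∧ ∀ e, x e = if e ∈ w.edges then 1 else 0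

/-- The cycle space of `G` over GF(2): the span of the indicator vectors of cycles. -/
noncomputable def cycleSpace {V : Type*} [DecidableEq V] (G : SimpleGraph V) :
    Submodule (ZMod 2) (Sym2 V → ZMod 2) :=
  Submodule.span (ZMod 2) {x | IsCycleVec G x}

/-- The length (number of edges) of a cycle vector. -/
noncomputable def cycVecLen {n : ℕ} (x : Sym2 (Fin n) → ZMod 2) : ℕ :=
  (Finset.univ.filter fun e : Sym2 (Fin n) => x e = 1).card

/-!
Every cycle of `G` has length at least the girth `c log n`, so a basis of `Ω(n)` cycles has total
length `Ω(n log n)`. Counting that total length edge by edge instead, it is spread over at most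
`d n / 2` edges, so by averaging some edge lies in `Ω(log n)` cycles of the basis.
-/

open Finset SimpleGraph

theorem Finset.exists_le_of_card_nsmul_le_sum {ι M : Type*} [AddCommMonoid M] [LinearOrder M]
    [IsOrderedCancelAddMonoid M] {s : Finset ι} {f : ι → M} {a : M}
    (hs : ∑ i ∈ s, f i ≠ 0) (h : #s • a ≤ ∑ i ∈ s, f i) : ∃ i ∈ s, a ≤ f i :=
  exists_le_of_sum_le (nonempty_of_sum_ne_zero hs) (by simpa using h)

theorem SimpleGraph.two_mul_card_edgeFinset_le {V : Type*} [Fintype V] {G : SimpleGraph V}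
    [DecidableRel G.Adj] {d : ℕ} (h : ∀ v, G.degree v ≤ d) :
    2 * #G.edgeFinset ≤ Fintype.card V * d := by
  rw [← sum_degrees_eq_twice_card_edges]
  simpa using sum_le_sum fun v (_ : v ∈ univ) => h v

theorem SimpleGraph.ncard_neighborSet_eq_degree {V : Type*} {G : SimpleGraph V} (v : V)
    [Fintype (G.neighborSet v)] : (G.neighborSet v).ncard = G.degree v := by
  rw [Set.ncard_eq_toFinset_card', ← neighborFinset_def, card_neighborFinset_eq_degree]

section CycleVectors

variable {V : Type*} [DecidableEq V] {G : SimpleGraph V} {x : Sym2 V → ZMod 2}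

theorem IsCycleVec.mem_edgeSet (hx : IsCycleVec G x) {e : Sym2 V} (he : x e = 1) :
    e ∈ G.edgeSet := by
  obtain ⟨v, w, -, hxw⟩ := hx
  rw [hxw] at he
  split_ifs at he with hew
  · exact w.edges_subset_edgeSet hew
  · exact absurd he.symm one_ne_zero

theorem IsCycleVec.exists_isCycle_cycVecLen_eq {n : ℕ} {G : SimpleGraph (Fin n)}
    {x : Sym2 (Fin n) → ZMod 2} (hx : IsCycleVec G x) :
    ∃ (v : Fin n) (w : G.Walk v v), w.IsCycle ∧ cycVecLen x = w.length := by
  obtain ⟨v, w, hw, hxw⟩ := hx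
  refine ⟨v, w, hw, ?_⟩
  have hsupport : ({e | x e = 1} : Finset (Sym2 (Fin n))) = w.edges.toFinset := by
    ext e
    simp only [mem_filter, mem_univ, true_and, List.mem_toFinset, hxw e]
    split_ifs with he <;> simp [he]
  rw [cycVecLen, hsupport, List.toFinset_card_of_nodup hw.edges_nodup, Walk.length_edges]

theorem IsCycleVec.le_cycVecLen {n : ℕ} {G : SimpleGraph (Fin n)} {x : Sym2 (Fin n) → ZMod 2}
    {L : ℝ} (hgirth : ∀ (v : Fin n) (w : G.Walk v v), w.IsCycle → L ≤ w.length)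
    (hx : IsCycleVec G x) : L ≤ cycVecLen x := by
  obtain ⟨v, w, hw, hlen⟩ := hx.exists_isCycle_cycVecLen_eq
  exact hlen ▸ hgirth v w hw

end CycleVectors

theorem sum_cycVecLen_eq_sum_card_filter {n : ℕ} {G : SimpleGraph (Fin n)} [DecidableRel G.Adj]
    {B : Finset (Sym2 (Fin n) → ZMod 2)} (hB : ∀ x ∈ B, IsCycleVec G x) :
    ∑ x ∈ B, cycVecLen x = ∑ e ∈ G.edgeFinset, (B.filter fun x => x e = 1).card := by
  simp only [cycVecLen, card_filter]
  rw [sum_comm]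
  refine (sum_subset (subset_univ _) fun e _ he => ?_).symm
  refine sum_eq_zero fun x hx => if_neg fun hxe => he ?_
  exact mem_edgeFinset.mpr ((hB x hx).mem_edgeSet hxe)

/-- Let `G` be a connected bounded-degree graph on `n` vertices with girth
at least `c·log n` and nontrivial cycle space of dimension `Ω(n)` (as for bounded-degree
expanders, cf. the context: the cycle basis has `Θ(n)` elements). Then the total length of
the cycles of any cycle basis `B` is `Ω(n log n)`, and consequently some edge of `G`
belongs to `Ω(log n)` cycles of `B`. -/
theorem long_girth_cycle_basis_lower_bound (d : ℕ) (c c₀ : ℝ) (hc : 0 < c) (hc₀ : 0 < c₀) :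
    ∃ c₁ c₂ : ℝ, 0 < c₁ ∧ 0 < c₂ ∧ ∃ N₀ : ℕ, ∀ n : ℕ, N₀ ≤ n →
      ∀ G : SimpleGraph (Fin n), G.Connected →
      (∀ v, (G.neighborSet v).ncard ≤ d) →
      (∀ (v : Fin n) (w : G.Walk v v), w.IsCycle → c * Real.log n ≤ w.length) →
      cycleSpace G ≠ ⊥ →
      ∀ B : Finset (Sym2 (Fin n) → ZMod 2),
        (∀ x ∈ B, IsCycleVec G x) →
        LinearIndependent (ZMod 2) ((↑) : B → (Sym2 (Fin n) → ZMod 2)) →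
        Submodule.span (ZMod 2) (B : Set (Sym2 (Fin n) → ZMod 2)) = cycleSpace G →
        c₀ * n ≤ B.card →
        (c₁ * n * Real.log n ≤ ∑ x ∈ B, (cycVecLen x : ℝ)) ∧
        ∃ e ∈ G.edgeSet, c₂ * Real.log n ≤ (B.filter fun x => x e = 1).card := by
  classical
  refine ⟨c₀ * c, c₀ * c / (d + 1), by positivity, by positivity, 2, ?_⟩
  intro n hn G _ hdeg hgirth _ B hBcyc _ _ hBcard
  have hlog : 0 < Real.log n := Real.log_pos (by exact_mod_cast hn)
  have htotal : c₀ * c * n * Real.log n ≤ ∑ x ∈ B, (cycVecLen x : ℝ) := calc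
    c₀ * c * n * Real.log n = (c₀ * n) * (c * Real.log n) := by ring
    _ ≤ #B * (c * Real.log n) := by gcongr
    _ ≤ ∑ x ∈ B, (cycVecLen x : ℝ) := by
      simpa using card_nsmul_le_sum B _ _ fun x hx => (hBcyc x hx).le_cycVecLen hgirth
  refine ⟨htotal, ?_⟩
  have hincidences : ∑ x ∈ B, (cycVecLen x : ℝ)
      = ∑ e ∈ G.edgeFinset, ((B.filter fun x => x e = 1).card : ℝ) := by
    exact_mod_cast sum_cycVecLen_eq_sum_card_filter hBcyc
  have hedges : (#G.edgeFinset : ℝ) ≤ (d + 1) * n := by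
    have := G.two_mul_card_edgeFinset_le fun v => ncard_neighborSet_eq_degree (G := G) v ▸ hdeg v
    rw [Fintype.card_fin] at this
    exact_mod_cast (by nlinarith : #G.edgeFinset ≤ (d + 1) * n)
  rw [hincidences] at htotal
  obtain ⟨e, he, hle⟩ := exists_le_of_card_nsmul_le_sum (a := c₀ * c / (d + 1) * Real.log n)
    (htotal.trans_lt' (by positivity)).ne' <| htotal.trans' <| calc
      #G.edgeFinset • (c₀ * c / (d + 1) * Real.log n)
          ≤ (d + 1) * n * (c₀ * c / (d + 1) * Real.log n) := by
        rw [nsmul_eq_mul]; gcongr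
      _ = c₀ * c * n * Real.log n := by field_simp
  exact ⟨e, mem_edgeFinset.mp he, hle⟩
end

section
/- Let C_{K'} be a Majorana monomial of weight |K'| and let W = ∏_K exp(i ω_K C_K) be a product over pairwise disjoint index sets K with |K| ∈ {2,4}. Then W C_{K'} W† is a linear combination of Majorana monomials each of weight at most 3|K'|. -/
/-- Ordered product of Majorana operators over an index set. -/
noncomputable def majProd {M d : ℕ} (c : Fin M → Matrix (Fin d) (Fin d) ℂ)
    (K : Finset (Fin M)) : Matrix (Fin d) (Fin d) ℂ :=
  ((K.sort (· ≤ ·)).map c).prod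

/-- The Hermitian Majorana monomial `C_K = i^{|K|(|K|−1)/2} c_{k₁}⋯c_{k_{|K|}}`. -/
noncomputable def majCK {M d : ℕ} (c : Fin M → Matrix (Fin d) (Fin d) ℂ)
    (K : Finset (Fin M)) : Matrix (Fin d) (Fin d) ℂ :=
  (Complex.I ^ (K.card * (K.card - 1) / 2)) • majProd c K

/-- The gate `exp(i ω C_K)`. -/
noncomputable def majGate {M d : ℕ} (c : Fin M → Matrix (Fin d) (Fin d) ℂ)
    (ω : ℝ) (K : Finset (Fin M)) : Matrix (Fin d) (Fin d) ℂ :=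
  NormedSpace.exp ((Complex.I * (ω : ℂ)) • majCK c K)

/-!
Since `C_K² = 1`, a gate is `exp (iω C_K) = cosh (iω) + sinh (iω) C_K`. Monomials satisfy
`C_A C_B = (-1)^(|A||B| + |A ∩ B|) C_B C_A`, so for `|K|` even a gate fixes `C_T` when `|T ∩ K|` is
even, and otherwise sends it into the span of `C_T` and `C_T C_K ∝ C_{T ∆ K}`, where
`|T ∆ K| = |T| + |K| - 2|T ∩ K| ≤ |T| + 2|T ∩ K|` because `|K| ≤ 4`. As the gates have disjoint
supports, `T ∆ K` meets every other gate exactly as `T` does. Peeling the gates off from the inside,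
every monomial of `W C_{K'} W†` therefore has weight at most `|K'| + 2 ∑_K |K' ∩ K| ≤ 3|K'|`.
-/

open Complex
open scoped symmDiff

lemma Finset.singleton_symmDiff_of_notMem {α : Type*} [DecidableEq α] {a : α} {s : Finset α}
    (h : a ∉ s) : {a} ∆ s = insert a s := by
  rw [symmDiff_eq_union (disjoint_singleton_left.2 h), insert_eq]

lemma Finset.card_symmDiff_add_two_mul_card_inter {α : Type*} [DecidableEq α] (s t : Finset α) :
    (s ∆ t).card + 2 * (s ∩ t).card = s.card + t.card := by
  have hs := Finset.card_sdiff_add_card_inter s t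
  have ht := Finset.card_sdiff_add_card_inter t s
  rw [symmDiff_def, Finset.sup_eq_union, Finset.card_union_of_disjoint disjoint_sdiff_sdiff,
    Finset.inter_comm t s] at *
  omega

lemma sum_map_card_inter_le_card {α : Type*} [DecidableEq α] {l : List (Finset α)}
    (hl : l.Pairwise Disjoint) (T : Finset α) :
    (l.map fun s => (T ∩ s).card).sum ≤ T.card := by
  induction l generalizing T with
  | nil => simp
  | cons s l ih =>
    rw [List.pairwise_cons] at hl
    have hrest : (l.map fun s' => (T ∩ s').card) = l.map fun s' => ((T \ s) ∩ s').card :=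
      List.map_congr_left fun s' hs' => by
        rw [Finset.sdiff_inter_right_comm, Finset.sdiff_eq_self_of_disjoint
          (Finset.disjoint_of_subset_left Finset.inter_subset_right (hl.1 s' hs').symm)]
    have hle := ih hl.2 (T \ s)
    have hsplit := Finset.card_sdiff_add_card_inter T s
    rw [List.map_cons, List.sum_cons, hrest]
    omega

section Involution

variable {𝔸 : Type*} [Ring 𝔸] [Algebra ℂ 𝔸] {C X : 𝔸}

lemma cosh_sinh_conj_of_commute (hC : C * C = 1) (h : C * X = X * C) (z : ℂ) :
    (cosh z • 1 + sinh z • C) * X * (cosh (-z) • 1 + sinh (-z) • C) = X := by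
  have hinv : (cosh z • 1 + sinh z • C) * (cosh (-z) • 1 + sinh (-z) • C) = 1 := by
    simp only [cosh_neg, sinh_neg, add_mul, mul_add, smul_mul_smul_comm, one_mul, mul_one, hC]
    linear_combination (norm := module) (cosh_sq_sub_sinh_sq z) • (1 : 𝔸)
  have hX : (cosh z • 1 + sinh z • C) * X = X * (cosh z • 1 + sinh z • C) := by
    simp only [add_mul, mul_add, smul_mul_assoc, mul_smul_comm, one_mul, mul_one, h]
  rw [hX, mul_assoc, hinv, mul_one]

lemma cosh_sinh_conj_of_anticommute (hC : C * C = 1) (h : C * X = -(X * C)) (z : ℂ) :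
    (cosh z • 1 + sinh z • C) * X * (cosh (-z) • 1 + sinh (-z) • C) =
      cosh (2 * z) • X - sinh (2 * z) • (X * C) := by
  have hX : (cosh z • 1 + sinh z • C) * X = X * (cosh (-z) • 1 + sinh (-z) • C) := by
    simp only [cosh_neg, sinh_neg, add_mul, mul_add, smul_mul_assoc, mul_smul_comm, one_mul,
      mul_one, h]
    module
  have hsquare : (cosh (-z) • 1 + sinh (-z) • C) * (cosh (-z) • 1 + sinh (-z) • C) =
      cosh (2 * z) • (1 : 𝔸) - sinh (2 * z) • C := by
    simp only [cosh_neg, sinh_neg, cosh_two_mul, sinh_two_mul, add_mul, mul_add,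
      smul_mul_smul_comm, one_mul, mul_one, hC]
    module
  rw [hX, mul_assoc, hsquare, mul_sub, mul_smul_comm, mul_smul_comm, mul_one]

end Involution

section Exp

open scoped Nat

variable {𝔸 : Type*} [NormedRing 𝔸] [NormedAlgebra ℂ 𝔸] [CompleteSpace 𝔸] {C : 𝔸}

lemma exp_smul_of_mul_self_eq_one (hC : C * C = 1) (z : ℂ) :
    NormedSpace.exp (z • C) = cosh z • 1 + sinh z • C := by
  have hpow (n : ℕ) : ((n ! : ℂ)⁻¹) • (z • C) ^ n = (z ^ n / n !) • C ^ n := by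
    rw [smul_pow, smul_smul, div_eq_inv_mul]
  have hC2 : C ^ 2 = 1 := by rw [sq, hC]
  refine (NormedSpace.exp_series_hasSum_exp' (𝕂 := ℂ) (z • C)).unique (.even_add_odd ?_ ?_)
  · convert (hasSum_cosh z).smul_const (1 : 𝔸) using 2 with k
    rw [hpow, pow_mul C, hC2, one_pow]
  · convert (hasSum_sinh z).smul_const C using 2 with k
    rw [hpow, pow_succ C, pow_mul C, hC2, one_pow, one_mul]

end Exp

section Clifford

variable {M d : ℕ} (c : Fin M → Matrix (Fin d) (Fin d) ℂ)

@[simp]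
lemma majProd_empty : majProd c ∅ = 1 := by
  simp [majProd]

lemma majProd_insert_of_lt {a : Fin M} {s : Finset (Fin M)} (h : ∀ x ∈ s, a < x) :
    majProd c (insert a s) = c a * majProd c s := by
  have ha : a ∉ s := fun ha => lt_irrefl a (h a ha)
  rw [majProd, Finset.sort_insert _ (fun x hx => (h x hx).le) ha]
  rfl

variable (hanti : ∀ i j, i ≠ j → c i * c j = -(c j * c i))
include hanti

lemma mul_prod_map_eq_neg_one_pow_smul (i : Fin M) (l : List (Fin M)) :
    c i * (l.map c).prod = (-1 : ℂ) ^ (l.length + l.count i) • ((l.map c).prod * c i) := by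
  induction l with
  | nil => simp
  | cons j l ih =>
    simp only [List.map_cons, List.prod_cons, List.length_cons]
    rcases eq_or_ne j i with rfl | hij
    · rw [List.count_cons_self, add_add_add_comm, pow_add, neg_one_pow_two, mul_one,
        mul_assoc, ← mul_smul_comm, ← ih]
    · rw [List.count_cons_of_ne hij, ← mul_assoc, hanti i j hij.symm, neg_mul, mul_assoc, ih,
        add_right_comm, pow_succ, mul_neg_one, neg_smul, mul_smul_comm, mul_assoc]

lemma prod_map_mul_prod_map_eq_neg_one_pow_smul (l m : List (Fin M)) :
    (l.map c).prod * (m.map c).prod =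
      (-1 : ℂ) ^ (l.map fun i => m.length + m.count i).sum •
        ((m.map c).prod * (l.map c).prod) := by
  induction l with
  | nil => simp
  | cons i l ih =>
    simp only [List.map_cons, List.prod_cons, List.sum_cons]
    rw [mul_assoc, ih, mul_smul_comm, ← mul_assoc, mul_prod_map_eq_neg_one_pow_smul c hanti,
      smul_mul_assoc, smul_smul, ← pow_add, add_comm (List.map _ l).sum, mul_assoc]

lemma majProd_mul_majProd_comm (A B : Finset (Fin M)) :
    majProd c A * majProd c B =
      (-1 : ℂ) ^ (A.card * B.card + (A ∩ B).card) • (majProd c B * majProd c A) := by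
  rw [majProd, majProd, prod_map_mul_prod_map_eq_neg_one_pow_smul c hanti, Finset.length_sort]
  congr 2
  rw [← Multiset.sum_coe, ← Multiset.map_coe, Finset.sort_eq, ← Finset.sum_eq_multiset_sum]
  simp_rw [(Finset.sort_nodup B _).count, Finset.mem_sort, Finset.sum_add_distrib,
    Finset.sum_const, smul_eq_mul, ← Finset.card_filter, Finset.filter_mem_eq_inter]

lemma mul_majProd_of_notMem {a : Fin M} {s : Finset (Fin M)} (ha : a ∉ s) :
    c a * majProd c s = (-1 : ℂ) ^ s.card • (majProd c s * c a) := by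
  simpa [majProd, List.count_eq_zero_of_not_mem, ha] using
    mul_prod_map_eq_neg_one_pow_smul c hanti a (s.sort (· ≤ ·))

variable (hsq : ∀ i, c i * c i = 1)
include hsq

lemma majProd_mul_self (K : Finset (Fin M)) :
    majProd c K * majProd c K = (-1 : ℂ) ^ K.card.choose 2 • 1 := by
  induction K using Finset.induction_on_min with
  | empty => simp
  | insert a s has ih =>
    have ha : a ∉ s := fun h => lt_irrefl a (has a h)
    rw [majProd_insert_of_lt c has]
    nth_rewrite 1 [mul_majProd_of_notMem c hanti ha]
    rw [smul_mul_assoc, mul_assoc, ← mul_assoc (c a), hsq, one_mul, ih, smul_smul, ← pow_add,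
      Finset.card_insert_of_notMem ha, Nat.choose_succ_succ, Nat.choose_one_right]

lemma majCK_mul_self (K : Finset (Fin M)) : majCK c K * majCK c K = 1 := by
  rw [majCK, smul_mul_smul_comm, majProd_mul_self c hanti hsq, smul_smul, ← Nat.choose_two_right,
    ← pow_add, ← two_mul, pow_mul, I_sq, ← mul_pow]
  simp

lemma exists_mul_majProd_eq_smul (i : Fin M) (S : Finset (Fin M)) :
    ∃ z : ℂ, c i * majProd c S = z • majProd c ({i} ∆ S) := by
  induction S using Finset.induction_on_min with
  | empty =>
    refine ⟨1, ?_⟩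
    rw [one_smul, majProd_empty, mul_one, ← Finset.bot_eq_empty, symmDiff_bot]
    simp [majProd]
  | insert b s hbs ih =>
    have hb : b ∉ s := fun h => lt_irrefl b (hbs b h)
    rcases lt_trichotomy i b with hib | rfl | hbi
    · have hi : ∀ x ∈ insert b s, i < x := by
        simpa [hib] using fun x hx => hib.trans (hbs x hx)
      have hiS : i ∉ insert b s := fun h => lt_irrefl i (hi i h)
      refine ⟨1, ?_⟩
      rw [one_smul, ← majProd_insert_of_lt c hi, Finset.singleton_symmDiff_of_notMem hiS]
    · refine ⟨1, ?_⟩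
      rw [majProd_insert_of_lt c hbs, ← mul_assoc, hsq, one_mul, one_smul,
        ← Finset.singleton_symmDiff_of_notMem hb, symmDiff_symmDiff_cancel_left]
    · obtain ⟨z, hz⟩ := ih
      have hb' : ∀ x ∈ {i} ∆ s, b < x := by
        intro x hx
        rcases Finset.mem_symmDiff.1 hx with ⟨hx, -⟩ | ⟨hx, -⟩
        · rwa [Finset.mem_singleton.1 hx]
        · exact hbs x hx
      refine ⟨-z, ?_⟩
      rw [majProd_insert_of_lt c hbs, ← mul_assoc, hanti i b hbi.ne', neg_mul, mul_assoc, hz,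
        mul_smul_comm, ← majProd_insert_of_lt c hb', neg_smul,
        ← Finset.singleton_symmDiff_of_notMem fun h => (hb' b h).false, symmDiff_left_comm,
        Finset.singleton_symmDiff_of_notMem hb]

lemma exists_majProd_mul_majProd_eq_smul (A B : Finset (Fin M)) :
    ∃ z : ℂ, majProd c A * majProd c B = z • majProd c (A ∆ B) := by
  induction A using Finset.induction_on_min with
  | empty =>
    exact ⟨1, by rw [one_smul, majProd_empty, one_mul, ← Finset.bot_eq_empty, bot_symmDiff]⟩
  | insert a s has ih =>
    obtain ⟨z, hz⟩ := ih
    obtain ⟨w, hw⟩ := exists_mul_majProd_eq_smul c hanti hsq a (s ∆ B)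
    refine ⟨z * w, ?_⟩
    have ha : a ∉ s := fun h => lt_irrefl a (has a h)
    rw [majProd_insert_of_lt c has, mul_assoc, hz, mul_smul_comm, hw, smul_smul, ← symmDiff_assoc,
      Finset.singleton_symmDiff_of_notMem ha]

end Clifford

-- `NormedSpace.exp` only depends on the topology, so any matrix norm can be used to evaluate it.
lemma majGate_eq {M d : ℕ} {c : Fin M → Matrix (Fin d) (Fin d) ℂ} {K : Finset (Fin M)}
    (hK : majCK c K * majCK c K = 1) (ω : ℝ) :
    majGate c ω K = cosh (I * ω) • 1 + sinh (I * ω) • majCK c K := by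
  let _ : NormedRing (Matrix (Fin d) (Fin d) ℂ) := Matrix.linftyOpNormedRing
  let _ : NormedAlgebra ℂ (Matrix (Fin d) (Fin d) ℂ) := Matrix.linftyOpNormedAlgebra
  exact exp_smul_of_mul_self_eq_one hK _

section Gate

variable {M d : ℕ} (c : Fin M → Matrix (Fin d) (Fin d) ℂ)
  (hanti : ∀ i j, i ≠ j → c i * c j = -(c j * c i)) (hsq : ∀ i, c i * c i = 1)
include hanti hsq

lemma majGate_conj_eq_cosh_sinh (K : Finset (Fin M)) (ω : ℝ) (X : Matrix (Fin d) (Fin d) ℂ) :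
    majGate c ω K * X * majGate c (-ω) K =
      (cosh (I * ω) • 1 + sinh (I * ω) • majCK c K) * X *
        (cosh (-(I * ω)) • 1 + sinh (-(I * ω)) • majCK c K) := by
  have hK := majCK_mul_self c hanti hsq K
  rw [majGate_eq hK, majGate_eq hK, ofReal_neg, mul_neg]

lemma majGate_conj_majProd_of_even {K T : Finset (Fin M)} (hK : Even K.card)
    (hKT : Even (T ∩ K).card) (ω : ℝ) :
    majGate c ω K * majProd c T * majGate c (-ω) K = majProd c T := by
  refine (majGate_conj_eq_cosh_sinh c hanti hsq K ω _).trans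
    (cosh_sinh_conj_of_commute (majCK_mul_self c hanti hsq K) ?_ _)
  rw [majCK, smul_mul_assoc, mul_smul_comm, majProd_mul_majProd_comm c hanti, Finset.inter_comm,
    ((hK.mul_right _).add hKT).neg_one_pow, one_smul]

lemma majGate_conj_majProd_of_odd {K T : Finset (Fin M)} (hK : Even K.card)
    (hKT : Odd (T ∩ K).card) (ω : ℝ) :
    ∃ a b : ℂ, majGate c ω K * majProd c T * majGate c (-ω) K =
      a • majProd c T + b • majProd c (T ∆ K) := by
  have hanticomm : majCK c K * majProd c T = -(majProd c T * majCK c K) := by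
    rw [majCK, smul_mul_assoc, mul_smul_comm, majProd_mul_majProd_comm c hanti, Finset.inter_comm,
      ((hK.mul_right _).add_odd hKT).neg_one_pow, neg_one_smul, smul_neg]
  obtain ⟨z, hz⟩ := exists_majProd_mul_majProd_eq_smul c hanti hsq T K
  rw [majGate_conj_eq_cosh_sinh c hanti hsq,
    cosh_sinh_conj_of_anticommute (majCK_mul_self c hanti hsq K) hanticomm, majCK, mul_smul_comm,
    hz, smul_smul, smul_smul, sub_eq_add_neg, ← neg_smul]
  exact ⟨_, _, rfl⟩

end Gate

section Layer

variable {M d : ℕ} (c : Fin M → Matrix (Fin d) (Fin d) ℂ)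

def weightSpan (w : ℕ) : Submodule ℂ (Matrix (Fin d) (Fin d) ℂ) :=
  Submodule.span ℂ {A | ∃ K : Finset (Fin M), K.card ≤ w ∧ A = majProd c K}

lemma majProd_mem_weightSpan {T : Finset (Fin M)} {w : ℕ} (h : T.card ≤ w) :
    majProd c T ∈ weightSpan c w :=
  Submodule.subset_span ⟨T, h, rfl⟩

lemma weightSpan_mono {w w' : ℕ} (h : w ≤ w') : weightSpan c w ≤ weightSpan c w' :=
  Submodule.span_mono fun _ ⟨K, hK, hA⟩ => ⟨K, hK.trans h, hA⟩

noncomputable def layerConj (L : List (ℝ × Finset (Fin M))) :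
    Matrix (Fin d) (Fin d) ℂ →ₗ[ℂ] Matrix (Fin d) (Fin d) ℂ :=
  LinearMap.mulLeft ℂ (L.map fun t => majGate c t.1 t.2).prod ∘ₗ
    LinearMap.mulRight ℂ (L.reverse.map fun t => majGate c (-t.1) t.2).prod

lemma layerConj_apply (L : List (ℝ × Finset (Fin M))) (X : Matrix (Fin d) (Fin d) ℂ) :
    layerConj c L X = (L.map fun t => majGate c t.1 t.2).prod * X *
      (L.reverse.map fun t => majGate c (-t.1) t.2).prod :=
  (mul_assoc _ _ _).symm

lemma layerConj_nil (X : Matrix (Fin d) (Fin d) ℂ) : layerConj c [] X = X := by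
  simp [layerConj_apply]

lemma layerConj_append_singleton (L : List (ℝ × Finset (Fin M))) (t : ℝ × Finset (Fin M))
    (X : Matrix (Fin d) (Fin d) ℂ) :
    layerConj c (L ++ [t]) X = layerConj c L (majGate c t.1 t.2 * X * majGate c (-t.1) t.2) := by
  simp only [layerConj_apply, List.map_append, List.prod_append, List.reverse_append,
    List.reverse_singleton, List.singleton_append, List.map_cons, List.prod_cons,
    List.map_nil, List.prod_nil, mul_one, mul_assoc]

variable (hanti : ∀ i j, i ≠ j → c i * c j = -(c j * c i)) (hsq : ∀ i, c i * c i = 1)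
include hanti hsq

theorem layerConj_majProd_mem_weightSpan (L : List (ℝ × Finset (Fin M)))
    (hdisj : (L.map Prod.snd).Pairwise Disjoint)
    (hcard : ∀ t ∈ L, Even t.2.card ∧ t.2.card ≤ 4)
    (T : Finset (Fin M)) :
    layerConj c L (majProd c T) ∈
      weightSpan c (T.card + 2 * (L.map fun t => (T ∩ t.2).card).sum) := by
  induction L using List.reverseRecOn generalizing T with
  | nil =>
    rw [layerConj_nil]
    exact majProd_mem_weightSpan c (by simp)
  | append_singleton L t ih =>
    rw [List.map_append, List.pairwise_append] at hdisj
    obtain ⟨hdisjL, -, hcross⟩ := hdisj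
    have hdisjt (s) (hs : s ∈ L) : Disjoint t.2 s.2 :=
      (hcross s.2 (List.mem_map_of_mem hs) t.2 (by simp)).symm
    obtain ⟨ht_even, ht_le⟩ := hcard t (by simp)
    have ih := ih hdisjL fun s hs => hcard s (by simp [hs])
    rw [layerConj_append_singleton, List.map_append, List.sum_append]
    simp only [List.map_cons, List.map_nil, List.sum_cons, List.sum_nil, add_zero]
    rcases Nat.even_or_odd (T ∩ t.2).card with hT | hT
    · rw [majGate_conj_majProd_of_even c hanti hsq ht_even hT]
      exact weightSpan_mono c (by omega) (ih T)
    · obtain ⟨a, b, hab⟩ := majGate_conj_majProd_of_odd c hanti hsq ht_even hT t.1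
      have hsum : (L.map fun s => ((T ∆ t.2) ∩ s.2).card) = L.map fun s => (T ∩ s.2).card :=
        List.map_congr_left fun s hs => by
          rw [← Finset.inf_eq_inter, ← Finset.inf_eq_inter, inf_symmDiff_distrib_right,
            disjoint_iff.1 (hdisjt s hs), symmDiff_bot]
      have hcard_symmDiff := Finset.card_symmDiff_add_two_mul_card_inter T t.2
      have hpos := hT.pos
      have ih' := ih (T ∆ t.2)
      rw [hsum] at ih'
      rw [hab, map_add, map_smul, map_smul]
      exact add_mem (Submodule.smul_mem _ _ (weightSpan_mono c (by omega) (ih T)))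
        (Submodule.smul_mem _ _ (weightSpan_mono c (by omega) ih'))

end Layer

theorem layer_conjugation_weight_bound_general {n d : ℕ}
    (c : Fin (2 * n) → Matrix (Fin d) (Fin d) ℂ)
    (hsq : ∀ i, c i * c i = 1)
    (hanti : ∀ i j, i ≠ j → c i * c j = -(c j * c i))
    (K' : Finset (Fin (2 * n)))
    (L : List (ℝ × Finset (Fin (2 * n))))
    (hdisj : (L.map Prod.snd).Pairwise Disjoint)
    (hcard : ∀ t ∈ L, t.2.card = 2 ∨ t.2.card = 4) :
    ((L.map fun t => majGate c t.1 t.2).prod * majCK c K' *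
        (L.reverse.map fun t => majGate c (-t.1) t.2).prod) ∈
      Submodule.span ℂ
        {A : Matrix (Fin d) (Fin d) ℂ |
          ∃ K'' : Finset (Fin (2 * n)), K''.card ≤ 3 * K'.card ∧ A = majProd c K''} := by
  have hcard' : ∀ t ∈ L, Even t.2.card ∧ t.2.card ≤ 4 := fun t ht => by
    rcases hcard t ht with h | h <;> rw [h] <;> decide
  have hsum : (L.map fun t => (K' ∩ t.2).card).sum ≤ K'.card := by
    simpa [List.map_map, Function.comp_def] using sum_map_card_inter_le_card hdisj K'
  rw [← layerConj_apply, majCK, map_smul]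
  refine Submodule.smul_mem _ _ (weightSpan_mono c ?_
    (layerConj_majProd_mem_weightSpan c hanti hsq L hdisj hcard' K'))
  omega

/-- If `W = ∏_K exp(i ω_K C_K)` is a single layer of gates over pairwise
disjoint index sets `K` with `|K| ∈ {2,4}`, then `W C_{K'} W†` is a linear combination of
Majorana monomials, each of weight at most `3|K'|`. -/
theorem layer_conjugation_weight_bound {n d : ℕ}
    (c : Fin (2 * n) → Matrix (Fin d) (Fin d) ℂ)
    (hherm : ∀ i, (c i).IsHermitian)
    (hsq : ∀ i, c i * c i = 1)
    (hanti : ∀ i j, i ≠ j → c i * c j = -(c j * c i))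
    (K' : Finset (Fin (2 * n)))
    (L : List (ℝ × Finset (Fin (2 * n))))
    (hdisj : (L.map Prod.snd).Pairwise Disjoint)
    (hcard : ∀ t ∈ L, t.2.card = 2 ∨ t.2.card = 4) :
    ((L.map fun t => majGate c t.1 t.2).prod * majCK c K' *
        (L.reverse.map fun t => majGate c (-t.1) t.2).prod) ∈
      Submodule.span ℂ
        {A : Matrix (Fin d) (Fin d) ℂ |
          ∃ K'' : Finset (Fin (2 * n)), K''.card ≤ 3 * K'.card ∧ A = majProd c K''} :=
  layer_conjugation_weight_bound_general c hsq hanti K' L hdisj hcard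
end

section
/- Let C be an operator that is a linear combination of Majorana monomials each of weight at most L/2 on 2n Majorana operators, and let π(s) = ∏_{j=1}^n (I + (−1)^{s_j} i c_{2j−1}c_{2j})/2 for s ∈ {0,1}^n. Then for any bitstrings s₁, s₂ with Hamming distance |s₁ − s₂| > L/2, one has π(s₁) C π(s₂) = 0. -/
/-- Index of the Majorana operator `c_{2j−1}` (0-based: `c_{2j}`). -/
def idx₀ {n : ℕ} (j : Fin n) : Fin (2 * n) := ⟨2 * j.1, by have := j.2; omega⟩

/-- Index of the Majorana operator `c_{2j}` (0-based: `c_{2j+1}`). -/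
def idx₁ {n : ℕ} (j : Fin n) : Fin (2 * n) := ⟨2 * j.1 + 1, by have := j.2; omega⟩

/-- The projector `π(s) = ∏_j (I + (−1)^{s_j} i c_{2j−1}c_{2j})/2`. -/
noncomputable def numProj {n d : ℕ} (c : Fin (2 * n) → Matrix (Fin d) (Fin d) ℂ)
    (s : Fin n → Bool) : Matrix (Fin d) (Fin d) ℂ :=
  ((List.finRange n).map fun j =>
    ((1 : ℂ) / 2) • ((1 : Matrix (Fin d) (Fin d) ℂ) +
      ((if s j then (-1 : ℂ) else 1) * Complex.I) • (c (idx₀ j) * c (idx₁ j)))).prod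

/-!
Pick a site `j` where `s₁` and `s₂` differ and whose pair `{c_{2j-1}, c_{2j}}` the monomial
`C_K` avoids; one exists because `C_K` touches at most `|K| < |s₁ - s₂|` pairs. The pair
operator `c_{2j-1} c_{2j}` then commutes with `C_K`, hence so does the `j`-th factor of `π(s₂)`.
All factors of the projectors commute, so `π(s₁) C_K π(s₂)` contains the product of the `j`-th
factors of `π(s₁)` and `π(s₂)`, which are the complementary projectors
`(1 ± i c_{2j-1} c_{2j})/2`.
-/

section Algebra

variable {A : Type*} [Ring A]

theorem commute_mul_of_anticommute {x y z : A} (hx : x * z = -(z * x))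
    (hy : y * z = -(z * y)) : Commute (x * y) z := by
  rw [Commute, SemiconjBy, mul_assoc, hy, mul_neg, ← mul_assoc, hx, neg_mul, neg_neg, mul_assoc]

theorem List.prod_map_eq_mul_prod_map_erase {M ι : Type*} [Monoid M] [DecidableEq ι]
    {l : List ι} {f : ι → M} (hf : l.Pairwise fun a b => Commute (f a) (f b)) {j : ι}
    (hj : j ∈ l) : (l.map f).prod = f j * ((l.erase j).map f).prod := by
  rw [((List.perm_cons_erase hj).map f).prod_eq' (List.pairwise_map.2 hf), List.map_cons,
    List.prod_cons]

theorem List.prod_map_eq_prod_map_erase_mul {M ι : Type*} [Monoid M] [DecidableEq ι]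
    {l : List ι} {f : ι → M} (hf : l.Pairwise fun a b => Commute (f a) (f b)) {j : ι}
    (hj : j ∈ l) : (l.map f).prod = ((l.erase j).map f).prod * f j := by
  rw [(((List.perm_cons_erase hj).trans (List.perm_append_singleton j _).symm).map f).prod_eq'
    (List.pairwise_map.2 hf), List.map_append, List.prod_append, List.map_singleton,
    List.prod_singleton]

variable [Algebra ℂ A]

theorem Commute.smul_one_add_smul_left {X Y : A} (h : Commute X Y) (r β : ℂ) :
    Commute (r • (1 + β • X)) Y :=
  ((Commute.one_left Y).add_left (h.smul_left β)).smul_left r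

theorem half_one_add_smul_mul_half_one_add_neg_smul {X : A} (hX : X * X = -1) {α : ℂ}
    (hα : α * α = -1) :
    ((1 / 2 : ℂ) • (1 + α • X)) * ((1 / 2 : ℂ) • (1 + (-α) • X)) = 0 := by
  have : (1 + α • X) * (1 + (-α) • X) = 0 := by
    simp only [mul_add, add_mul, mul_one, one_mul, smul_mul_smul_comm, hX, mul_neg, hα, neg_neg]
    module
  rw [smul_mul_smul_comm, this, smul_zero]

end Algebra

section Majorana

variable {A : Type*} [Ring A] {n : ℕ} (c : Fin (2 * n) → A)

def pairOf (k : Fin (2 * n)) : Fin n := ⟨k / 2, by omega⟩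

@[simp] theorem pairOf_idx₀ (j : Fin n) : pairOf (idx₀ j) = j := by
  ext; simp [pairOf, idx₀]

@[simp] theorem pairOf_idx₁ (j : Fin n) : pairOf (idx₁ j) = j := by
  ext; simp [pairOf, idx₁]; omega

theorem idx₀_ne_idx₁ (j : Fin n) : idx₀ j ≠ idx₁ j := by
  simp [idx₀, idx₁, Fin.ext_iff]

def majPair (j : Fin n) : A := c (idx₀ j) * c (idx₁ j)

variable {c}

theorem majPair_mul_self (hsq : ∀ i, c i * c i = 1)
    (hanti : ∀ i j, i ≠ j → c i * c j = -(c j * c i)) (j : Fin n) :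
    majPair c j * majPair c j = -1 := by
  calc majPair c j * majPair c j = c (idx₀ j) * (c (idx₁ j) * c (idx₀ j)) * c (idx₁ j) := by
        simp only [majPair, mul_assoc]
    _ = -1 := by
        rw [hanti _ _ (idx₀_ne_idx₁ j).symm, mul_neg, neg_mul, ← mul_assoc, hsq, one_mul,
          hsq]

theorem commute_majPair_of_ne (hanti : ∀ i j, i ≠ j → c i * c j = -(c j * c i))
    {j : Fin n} {k : Fin (2 * n)} (h₀ : idx₀ j ≠ k) (h₁ : idx₁ j ≠ k) :
    Commute (majPair c j) (c k) :=
  commute_mul_of_anticommute (hanti _ _ h₀) (hanti _ _ h₁)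

theorem commute_majPair_majPair (hanti : ∀ i j, i ≠ j → c i * c j = -(c j * c i))
    {a b : Fin n} (hab : a ≠ b) : Commute (majPair c a) (majPair c b) := by
  have hne : ∀ {k k' : Fin (2 * n)}, pairOf k = a → pairOf k' = b → k ≠ k' :=
    fun ha hb h => hab (ha ▸ hb ▸ congrArg pairOf h)
  exact (commute_majPair_of_ne hanti (hne (by simp) (by simp)) (hne (by simp) (by simp))).mul_right
      (commute_majPair_of_ne hanti (hne (by simp) (by simp)) (hne (by simp) (by simp)))

variable [Algebra ℂ A]

variable (c) in
noncomputable def projFactor (s : Fin n → Bool) (j : Fin n) : A :=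
  (1 / 2 : ℂ) • (1 + ((if s j then -1 else 1) * Complex.I) • majPair c j)

theorem commute_projFactor (hanti : ∀ i j, i ≠ j → c i * c j = -(c j * c i))
    (s s' : Fin n → Bool) {a b : Fin n} (hab : a ≠ b) :
    Commute (projFactor c s a) (projFactor c s' b) :=
  ((commute_majPair_majPair hanti hab).symm.smul_one_add_smul_left _ _).symm.smul_one_add_smul_left
    _ _

theorem projFactor_mul_projFactor_eq_zero (hsq : ∀ i, c i * c i = 1)
    (hanti : ∀ i j, i ≠ j → c i * c j = -(c j * c i)) {s₁ s₂ : Fin n → Bool} {j : Fin n}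
    (h : s₁ j ≠ s₂ j) : projFactor c s₁ j * projFactor c s₂ j = 0 := by
  have hsign : (if s₂ j then (-1 : ℂ) else 1) * Complex.I =
      -((if s₁ j then -1 else 1) * Complex.I) := by
    cases h₁ : s₁ j <;> cases h₂ : s₂ j <;> simp_all
  rw [projFactor, projFactor, hsign]
  refine half_one_add_smul_mul_half_one_add_neg_smul (majPair_mul_self hsq hanti j) ?_
  cases s₁ j <;> simp

end Majorana

section Matrix

variable {n d : ℕ} {c : Fin (2 * n) → Matrix (Fin d) (Fin d) ℂ}

theorem numProj_eq_mul_projFactor (hanti : ∀ i j, i ≠ j → c i * c j = -(c j * c i))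
    (s : Fin n → Bool) (j : Fin n) :
    numProj c s = (((List.finRange n).erase j).map (projFactor c s)).prod * projFactor c s j :=
  List.prod_map_eq_prod_map_erase_mul
    ((List.nodup_finRange n).imp (commute_projFactor hanti s s)) (List.mem_finRange j)

theorem numProj_eq_projFactor_mul (hanti : ∀ i j, i ≠ j → c i * c j = -(c j * c i))
    (s : Fin n → Bool) (j : Fin n) :
    numProj c s = projFactor c s j * (((List.finRange n).erase j).map (projFactor c s)).prod :=
  List.prod_map_eq_mul_prod_map_erase
    ((List.nodup_finRange n).imp (commute_projFactor hanti s s)) (List.mem_finRange j)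

theorem commute_majPair_majProd (hanti : ∀ i j, i ≠ j → c i * c j = -(c j * c i))
    {j : Fin n} {K : Finset (Fin (2 * n))} (h₀ : idx₀ j ∉ K) (h₁ : idx₁ j ∉ K) :
    Commute (majPair c j) (majProd c K) := by
  refine Commute.list_prod_right _ _ fun x hx => ?_
  obtain ⟨k, hk, rfl⟩ := List.mem_map.1 hx
  rw [Finset.mem_sort] at hk
  exact commute_majPair_of_ne hanti (ne_of_mem_of_not_mem hk h₀).symm
    (ne_of_mem_of_not_mem hk h₁).symm

/-- A monomial of weight `|K|` touches at most `|K|` of the pairs `{2j-1, 2j}`. -/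
theorem exists_ne_idx_not_mem_of_card_lt_hammingDist {s₁ s₂ : Fin n → Bool}
    {K : Finset (Fin (2 * n))} (hK : K.card < hammingDist s₁ s₂) :
    ∃ j, s₁ j ≠ s₂ j ∧ idx₀ j ∉ K ∧ idx₁ j ∉ K := by
  obtain ⟨j, hj, hjK⟩ := Finset.exists_mem_notMem_of_card_lt_card
    (t := {i | s₁ i ≠ s₂ i}) ((Finset.card_image_le (f := pairOf)).trans_lt hK)
  refine ⟨j, (Finset.mem_filter.1 hj).2, fun h => hjK ?_, fun h => hjK ?_⟩
  · exact Finset.mem_image.2 ⟨_, h, pairOf_idx₀ j⟩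
  · exact Finset.mem_image.2 ⟨_, h, pairOf_idx₁ j⟩

theorem numProj_mul_majProd_mul_numProj_eq_zero (hsq : ∀ i, c i * c i = 1)
    (hanti : ∀ i j, i ≠ j → c i * c j = -(c j * c i)) {s₁ s₂ : Fin n → Bool}
    {K : Finset (Fin (2 * n))} (hK : K.card < hammingDist s₁ s₂) :
    numProj c s₁ * majProd c K * numProj c s₂ = 0 := by
  obtain ⟨j, hj, h₀, h₁⟩ := exists_ne_idx_not_mem_of_card_lt_hammingDist hK
  have hcomm : Commute (majProd c K) (projFactor c s₂ j) :=
    ((commute_majPair_majProd hanti h₀ h₁).smul_one_add_smul_left _ _).symm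
  rw [numProj_eq_mul_projFactor hanti s₁ j, numProj_eq_projFactor_mul hanti s₂ j]
  simp only [mul_assoc, hcomm.left_comm]
  rw [← mul_assoc (projFactor c s₁ j), projFactor_mul_projFactor_eq_zero hsq hanti hj, zero_mul,
    mul_zero]

end Matrix

theorem low_weight_operator_annihilated_general {n d : ℕ} (L : ℕ)
    (c : Fin (2 * n) → Matrix (Fin d) (Fin d) ℂ)
    (hsq : ∀ i, c i * c i = 1)
    (hanti : ∀ i j, i ≠ j → c i * c j = -(c j * c i))
    (C : Matrix (Fin d) (Fin d) ℂ)
    (hC : C ∈ Submodule.span ℂ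
      {A : Matrix (Fin d) (Fin d) ℂ |
        ∃ K : Finset (Fin (2 * n)), 2 * K.card ≤ L ∧ A = majProd c K})
    (s₁ s₂ : Fin n → Bool) (hdist : L < 2 * hammingDist s₁ s₂) :
    numProj c s₁ * C * numProj c s₂ = 0 := by
  have hspan : Submodule.span ℂ {A : Matrix (Fin d) (Fin d) ℂ |
      ∃ K : Finset (Fin (2 * n)), 2 * K.card ≤ L ∧ A = majProd c K} ≤
      LinearMap.ker (LinearMap.mulLeftRight ℂ (numProj c s₁, numProj c s₂)) := by
    rw [Submodule.span_le]
    rintro _ ⟨K, hK, rfl⟩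
    exact numProj_mul_majProd_mul_numProj_eq_zero hsq hanti (by omega)
  simpa using hspan hC

/-- If `C` is a linear combination of Majorana monomials of weight at most
`L/2` (i.e. `2·weight ≤ L`) on `2n` Majorana operators, then `π(s₁) C π(s₂) = 0` whenever
the Hamming distance between `s₁` and `s₂` exceeds `L/2` (i.e. `L < 2·distance`). -/
theorem low_weight_operator_annihilated {n d : ℕ} (L : ℕ)
    (c : Fin (2 * n) → Matrix (Fin d) (Fin d) ℂ)
    (hherm : ∀ i, (c i).IsHermitian)
    (hsq : ∀ i, c i * c i = 1)
    (hanti : ∀ i j, i ≠ j → c i * c j = -(c j * c i))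
    (C : Matrix (Fin d) (Fin d) ℂ)
    (hC : C ∈ Submodule.span ℂ
      {A : Matrix (Fin d) (Fin d) ℂ |
        ∃ K : Finset (Fin (2 * n)), 2 * K.card ≤ L ∧ A = majProd c K})
    (s₁ s₂ : Fin n → Bool) (hdist : L < 2 * hammingDist s₁ s₂) :
    numProj c s₁ * C * numProj c s₂ = 0 :=
  low_weight_operator_annihilated_general L c hsq hanti C hC s₁ s₂ hdist
end

section
/- Let H_qb be an n-qubit Hamiltonian and let H be the 3n/2-fermion Hamiltonian obtained by replacing each Pauli X_j ↦ i c_{y,j}c_{z,j}, Y_j ↦ i c_{x,j}c_{z,j}, Z_j ↦ i c_{x,j}c_{y,j}. Then H is unitarily equivalent to H_qb ⊗ I where I acts on an auxiliary space of dimension 2^{n/2}; in particular H has the same spectrum as H_qb with each eigenvalue's multiplicity multiplied by 2^{n/2}. -/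
open Matrix
open scoped Kronecker

/-- The Pauli string `∏_j P_{a_j, j}` (ordered product; `0 ↦ I`, `1 ↦ X_j`, `2 ↦ Y_j`,
`3 ↦ Z_j`). -/
noncomputable def pauliString {n D : ℕ} (X Y Z : Fin n → Matrix (Fin D) (Fin D) ℂ)
    (a : Fin n → Fin 4) : Matrix (Fin D) (Fin D) ℂ :=
  ((List.finRange n).map fun j =>
    if a j = 1 then X j else if a j = 2 then Y j else if a j = 3 then Z j else 1).prod

/-- The fermionic image of a Pauli string under
`X_j ↦ i c_{y,j}c_{z,j}`, `Y_j ↦ i c_{x,j}c_{z,j}`, `Z_j ↦ i c_{x,j}c_{y,j}`,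
where `cc j 0 = c_{x,j}`, `cc j 1 = c_{y,j}`, `cc j 2 = c_{z,j}`. -/
noncomputable def fermiString {n D : ℕ} (cc : Fin n → Fin 3 → Matrix (Fin D) (Fin D) ℂ)
    (a : Fin n → Fin 4) : Matrix (Fin D) (Fin D) ℂ :=
  ((List.finRange n).map fun j =>
    if a j = 1 then Complex.I • (cc j 1 * cc j 2)
    else if a j = 2 then Complex.I • (cc j 0 * cc j 2)
    else if a j = 3 then Complex.I • (cc j 0 * cc j 1) else 1).prod

/-!
The operators `X'_j = i c_{y,j} c_{z,j}` and `Z'_j = i c_{x,j} c_{y,j}` obey the same relations as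
`X_j` and `Z_j` (hermitian involutions, anticommuting on a site, commuting across sites), and
`i c_{x,j} c_{z,j} = i X'_j Z'_j` just as `Y_j = i X_j Z_j`. Every such family is the standard
one on `ℂ^{Finset ι}` tensored with a multiplicity space. The multiplicity space is the range of
`P = ∏_j (1 + Z_j)/2`, and the words `X^s = ∏_{j ∈ s} X_j` carry it isometrically onto the joint
eigenspaces of the `Z_j`, which are pairwise orthogonal (`P X^u P = 0` for `u ≠ ∅`) and sum to the
whole space. In dimension `2^n` the multiplicity is one, so comparing the qubit and the fermionic
family through the standard one gives a unitary `W` with `X'_j W = W (X_j ⊗ 1)` and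
`Z'_j W = W (Z_j ⊗ 1)`, of multiplicity `2^{3p} / 2^{2p} = 2^p`. Every fermionic Pauli string, hence
`H`, is then `W (· ⊗ 1) W*` applied to its qubit counterpart.
-/

open scoped symmDiff

section Anticommute

variable {R : Type*} [Ring R]

theorem commute_mul_of_anticommute_s14 {x a b : R} (ha : x * a = -(a * x)) (hb : x * b = -(b * x)) :
    Commute x (a * b) :=
  calc x * (a * b) = -(a * (x * b)) := by rw [← mul_assoc, ha, neg_mul, mul_assoc]
    _ = a * b * x := by rw [hb, mul_neg, neg_neg, mul_assoc]

theorem mul_mul_mul_eq_neg_of_anticommute {a b c : R} (hab : a * b = -(b * a))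
    (hac : a * c = -(c * a)) (hbc : b * c = -(c * b)) : b * c * (a * b) = -(a * b * (b * c)) := by
  have hc : Commute c (a * b) :=
    commute_mul_of_anticommute_s14 (by rw [hac, neg_neg]) (by rw [hbc, neg_neg])
  calc b * c * (a * b) = b * a * b * c := by rw [mul_assoc, hc.eq]; noncomm_ring
    _ = -(a * b * (b * c)) := by rw [show b * a = -(a * b) by rw [hab, neg_neg]]; noncomm_ring

theorem mul_mul_self_eq_neg_one_of_anticommute {a b : R} (hab : a * b = -(b * a)) (ha : a * a = 1)
    (hb : b * b = 1) : a * b * (a * b) = -1 := by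
  calc a * b * (a * b) = -(a * a * (b * b)) := by
        rw [mul_assoc a b, ← mul_assoc b, show b * a = -(a * b) by rw [hab, neg_neg]]; noncomm_ring
    _ = -1 := by rw [ha, hb, mul_one]

end Anticommute

theorem Commute.half_one_add {R : Type*} [Ring R] [Module ℂ R] [SMulCommClass ℂ R R]
    [IsScalarTower ℂ R R] {a b : R} (hab : Commute a b) :
    Commute ((2⁻¹ : ℂ) • (1 + a)) ((2⁻¹ : ℂ) • (1 + b)) :=
  (((Commute.one_left _).add_left ((Commute.one_right a).add_right hab)).smul_left _).smul_right _

theorem Matrix.exists_isometry_of_isStarProjection {𝕜 m : Type*} [RCLike 𝕜] [Fintype m]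
    [DecidableEq m] {P : Matrix m m 𝕜} (hP : IsStarProjection P) :
    ∃ (r : ℕ) (B : Matrix m (Fin r) 𝕜), Bᴴ * B = 1 ∧ B * Bᴴ = P := by
  have hH : P.IsHermitian := hP.isSelfAdjoint
  set U : Matrix m m 𝕜 := (hH.eigenvectorUnitary : Matrix m m 𝕜)
  set d : m → 𝕜 := RCLike.ofReal ∘ hH.eigenvalues
  have hUU : star U * U = 1 := Unitary.coe_star_mul_self _
  have hUU' : U * star U = 1 := Unitary.coe_mul_star_self _
  have hPU : P = U * diagonal d * star U := hH.spectral_theorem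
  have hd : ∀ i, d i = 0 ∨ d i = 1 := by
    have hD : diagonal d = star U * P * U := by
      rw [hPU, Matrix.mul_assoc, Matrix.mul_assoc, hUU, Matrix.mul_one, ← Matrix.mul_assoc, hUU,
        Matrix.one_mul]
    have hDD : diagonal d * diagonal d = diagonal d := by
      rw [hD, show star U * P * U * (star U * P * U) = star U * (P * (U * star U) * P) * U by
        noncomm_ring, hUU', Matrix.mul_one, hP.isIdempotentElem.eq]
    exact fun i => IsIdempotentElem.iff_eq_zero_or_one.mp
      (by simpa using congrFun (congrFun hDD i) i : d i * d i = d i)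
  let σ : Fin (Fintype.card {i // d i = 1}) ≃ {i // d i = 1} := (Fintype.equivFin _).symm
  have hσ : Function.Injective fun k => (σ k : m) := Subtype.val_injective.comp σ.injective
  refine ⟨_, U.submatrix id fun k => σ k, ?_, ?_⟩
  · rw [conjTranspose_submatrix, ← submatrix_mul _ _ _ _ _ Function.bijective_id,
      ← star_eq_conjTranspose, hUU, submatrix_one _ hσ]
  · ext a b
    rw [hPU]
    simp only [mul_apply, submatrix_apply, conjTranspose_apply, id, diagonal_apply, mul_ite,
      mul_zero, Finset.sum_ite_eq', Finset.mem_univ, if_true, star_apply]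
    rw [σ.sum_comp (fun i : {i // d i = 1} => U a i * star (U b i))]
    have hterm : ∀ j, U a j * d j * star (U b j) = if d j = 1 then U a j * star (U b j) else 0 := by
      intro j; rcases hd j with h0 | h1 <;> simp [*]
    rw [Finset.sum_congr rfl fun j _ => hterm j, ← Finset.sum_filter]
    exact (Finset.sum_subtype _ (by simp) fun j => U a j * star (U b j)).symm

theorem Matrix.spectrum_kronecker_one {K l n : Type*} [Field K] [Fintype l] [DecidableEq l]
    [Fintype n] [DecidableEq n] [Nonempty n] (A : Matrix l l K) :
    spectrum K (A ⊗ₖ (1 : Matrix n n K)) = spectrum K A := by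
  ext z
  have hsub : algebraMap K _ z - A ⊗ₖ (1 : Matrix n n K) = (algebraMap K _ z - A) ⊗ₖ 1 := by
    ext ⟨i, k⟩ ⟨j, k'⟩
    by_cases hk : k = k' <;> simp [algebraMap_eq_diagonal, diagonal_apply, hk]
  simp only [spectrum.mem_iff, hsub, isUnit_iff_isUnit_det, det_kronecker, det_one, one_pow,
    mul_one, isUnit_iff_ne_zero, ne_eq, pow_eq_zero_iff Fintype.card_ne_zero]

theorem Matrix.sum_kronecker {R ι l m n p : Type*} [CommSemiring R] (s : Finset ι)
    (A : ι → Matrix l m R) (B : Matrix n p R) : (∑ i ∈ s, A i) ⊗ₖ B = ∑ i ∈ s, A i ⊗ₖ B := by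
  ext
  simp [Matrix.sum_apply, Finset.sum_mul]

theorem Matrix.list_prod_map_mul_eq_mul_kronecker {R ι m n κ : Type*} [CommRing R] [Fintype m]
    [DecidableEq m] [Fintype n] [DecidableEq n] [Fintype κ] [DecidableEq κ]
    {F : ι → Matrix m m R} {G : ι → Matrix n n R} {W : Matrix m (n × κ) R} :
    ∀ l : List ι, (∀ j ∈ l, F j * W = W * (G j ⊗ₖ (1 : Matrix κ κ R))) →
      (l.map F).prod * W = W * ((l.map G).prod ⊗ₖ (1 : Matrix κ κ R))
  | [], _ => by simp
  | a :: l, h => by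
    rw [List.map_cons, List.prod_cons, Matrix.mul_assoc,
      list_prod_map_mul_eq_mul_kronecker l fun j hj => h j (List.mem_cons_of_mem a hj),
      ← Matrix.mul_assoc, h a List.mem_cons_self, Matrix.mul_assoc, ← mul_kronecker_mul,
      Matrix.one_mul, List.map_cons, List.prod_cons]

noncomputable def stdPauliX {ι : Type*} [DecidableEq ι] (j : ι) : Matrix (Finset ι) (Finset ι) ℂ :=
  of fun s t => if s = {j} ∆ t then 1 else 0

noncomputable def stdPauliZ {ι : Type*} [DecidableEq ι] (j : ι) : Matrix (Finset ι) (Finset ι) ℂ :=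
  diagonal fun s => if j ∈ s then -1 else 1

structure IsPauliFamily {ι m : Type*} [Fintype m] [DecidableEq m]
    (X Z : ι → Matrix m m ℂ) : Prop where
  isHermitian_X : ∀ j, (X j).IsHermitian
  isHermitian_Z : ∀ j, (Z j).IsHermitian
  X_mul_self : ∀ j, X j * X j = 1
  Z_mul_self : ∀ j, Z j * Z j = 1
  X_mul_Z : ∀ j, X j * Z j = -(Z j * X j)
  commute_X : Pairwise fun j k => Commute (X j) (X k)
  commute_Z : Pairwise fun j k => Commute (Z j) (Z k)
  commute_X_Z : Pairwise fun j k => Commute (X j) (Z k)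

namespace IsPauliFamily

variable {ι m : Type*} [Fintype m] [DecidableEq m] {X Z : ι → Matrix m m ℂ}
  (h : IsPauliFamily X Z)
include h

noncomputable def xWord (s : Finset ι) : Matrix m m ℂ :=
  s.noncommProd X fun _ _ _ _ hjk => h.commute_X hjk

noncomputable def zProj (u : Finset ι) : Matrix m m ℂ :=
  u.noncommProd (fun j => (2⁻¹ : ℂ) • (1 + Z j)) fun _ _ _ _ hjk => (h.commute_Z hjk).half_one_add

theorem xWord_empty : h.xWord ∅ = 1 := Finset.noncommProd_empty _ _

theorem commute_X_xWord {a : ι} {s : Finset ι} (ha : a ∉ s) : Commute (X a) (h.xWord s) :=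
  Finset.noncommProd_commute _ _ _ _ fun _ hk => h.commute_X (ne_of_mem_of_not_mem hk ha).symm

theorem commute_X_zProj {a : ι} {u : Finset ι} (ha : a ∉ u) : Commute (X a) (h.zProj u) :=
  Finset.noncommProd_commute _ _ _ _ fun _ hk =>
    ((Commute.one_right _).add_right (h.commute_X_Z (ne_of_mem_of_not_mem hk ha).symm)).smul_right _

theorem commute_Z_zProj (a : ι) (u : Finset ι) : Commute (Z a) (h.zProj u) :=
  Finset.noncommProd_commute _ _ _ _ fun k _ => by
    rcases eq_or_ne a k with rfl | hak
    · exact ((Commute.one_right _).add_right (Commute.refl _)).smul_right _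
    · exact ((Commute.one_right _).add_right (h.commute_Z hak)).smul_right _

theorem isStarProjection_half_one_add_Z (a : ι) : IsStarProjection ((2⁻¹ : ℂ) • (1 + Z a)) where
  isIdempotentElem := by
    rw [IsIdempotentElem, smul_mul_smul, add_mul, one_mul, mul_add, mul_one, h.Z_mul_self]
    module
  isSelfAdjoint := by
    have hZ : star (Z a) = Z a := h.isHermitian_Z a
    rw [IsSelfAdjoint, star_smul, star_add, star_one, hZ]
    norm_num

theorem half_one_add_Z_add_X_mul_mul_X (a : ι) :
    (2⁻¹ : ℂ) • (1 + Z a) + X a * ((2⁻¹ : ℂ) • (1 + Z a)) * X a = 1 := by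
  rw [mul_smul_comm, smul_mul_assoc, mul_add, add_mul, mul_one, h.X_mul_self, h.X_mul_Z,
    neg_mul, mul_assoc, h.X_mul_self, mul_one]
  module

variable [DecidableEq ι]

theorem xWord_insert {a : ι} {s : Finset ι} (ha : a ∉ s) :
    h.xWord (insert a s) = X a * h.xWord s :=
  Finset.noncommProd_insert_of_notMem _ _ _ _ ha

theorem zProj_insert {a : ι} {u : Finset ι} (ha : a ∉ u) :
    h.zProj (insert a u) = (2⁻¹ : ℂ) • (1 + Z a) * h.zProj u :=
  Finset.noncommProd_insert_of_notMem _ _ _ _ ha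

theorem X_mul_xWord (j : ι) (s : Finset ι) : X j * h.xWord s = h.xWord ({j} ∆ s) := by
  by_cases hj : j ∈ s
  · have hs : {j} ∆ s = s.erase j := by ext; simp [Finset.mem_symmDiff]; grind
    rw [hs, ← Finset.insert_erase hj, h.xWord_insert (Finset.notMem_erase j s), ← mul_assoc,
      h.X_mul_self, one_mul, Finset.erase_insert (Finset.notMem_erase j s)]
  · have hs : {j} ∆ s = insert j s := by ext; simp [Finset.mem_symmDiff]; grind
    rw [hs, h.xWord_insert hj]

theorem xWord_mul_xWord (s t : Finset ι) : h.xWord s * h.xWord t = h.xWord (s ∆ t) := by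
  induction s using Finset.induction_on with
  | empty => rw [h.xWord_empty, one_mul, ← Finset.bot_eq_empty, bot_symmDiff]
  | insert a s ha ih =>
    rw [h.xWord_insert ha, mul_assoc, ih, h.X_mul_xWord, ← symmDiff_assoc]
    congr 2
    ext; simp [Finset.mem_symmDiff]; grind

theorem isHermitian_xWord (s : Finset ι) : (h.xWord s).IsHermitian := by
  induction s using Finset.induction_on with
  | empty => rw [h.xWord_empty]; exact isHermitian_one
  | insert a s ha ih =>
    rw [h.xWord_insert ha, IsHermitian, conjTranspose_mul, ih.eq, (h.isHermitian_X a).eq,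
      (h.commute_X_xWord ha).eq]

theorem Z_mul_xWord (j : ι) (s : Finset ι) :
    Z j * h.xWord s = (if j ∈ s then -1 else 1 : ℂ) • (h.xWord s * Z j) := by
  induction s using Finset.induction_on with
  | empty => simp [h.xWord_empty]
  | insert a s ha ih =>
    rw [h.xWord_insert ha, ← mul_assoc]
    rcases eq_or_ne j a with rfl | hja
    · rw [← neg_eq_iff_eq_neg.mpr (h.X_mul_Z j), neg_mul, mul_assoc, ih, if_neg ha]
      simp [mul_assoc]
    · rw [← (h.commute_X_Z hja.symm).eq, mul_assoc, ih, mul_smul_comm, mul_assoc]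
      simp [hja]

theorem isStarProjection_zProj (u : Finset ι) : IsStarProjection (h.zProj u) := by
  induction u using Finset.induction_on with
  | empty => exact IsStarProjection.one _
  | insert a u ha ih =>
    rw [h.zProj_insert ha]
    exact (h.isStarProjection_half_one_add_Z a).mul ih
      (((Commute.one_left _).add_left (h.commute_Z_zProj a u)).smul_left _)

theorem Z_mul_zProj {j : ι} {u : Finset ι} (hj : j ∈ u) : Z j * h.zProj u = h.zProj u := by
  rw [← Finset.insert_erase hj, h.zProj_insert (Finset.notMem_erase j u), ← mul_assoc,
    mul_smul_comm, mul_add, mul_one, h.Z_mul_self, add_comm (Z j)]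

theorem zProj_mul_xWord_mul_zProj {j : ι} {s u : Finset ι} (hjs : j ∈ s) (hju : j ∈ u) :
    h.zProj u * h.xWord s * h.zProj u = 0 := by
  have hZ := h.Z_mul_zProj hju
  have hZ' : h.zProj u * Z j = h.zProj u := (h.commute_Z_zProj j u).eq ▸ hZ
  have hneg : h.zProj u * h.xWord s * h.zProj u = -(h.zProj u * h.xWord s * h.zProj u) :=
    calc h.zProj u * h.xWord s * h.zProj u
        = h.zProj u * (Z j * h.xWord s) * h.zProj u := by rw [← mul_assoc, hZ', mul_assoc]
      _ = -(h.zProj u * h.xWord s * h.zProj u) := by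
        rw [h.Z_mul_xWord, if_pos hjs, neg_one_smul, mul_neg, neg_mul, mul_assoc, mul_assoc, hZ,
          mul_assoc]
  have htwo : (2 : ℂ) • (h.zProj u * h.xWord s * h.zProj u) = 0 := by
    rw [two_smul]; nth_rewrite 1 [hneg]; exact neg_add_cancel _
  exact (smul_eq_zero.mp htwo).resolve_left two_ne_zero

theorem sum_xWord_mul_zProj_mul_xWord (u : Finset ι) :
    ∑ s ∈ u.powerset, h.xWord s * h.zProj u * h.xWord s = 1 := by
  induction u using Finset.induction_on with
  | empty => simp [h.xWord_empty, zProj]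
  | insert a u ha ih =>
    rw [Finset.sum_powerset_insert ha, ← ih, ← Finset.sum_add_distrib]
    refine Finset.sum_congr rfl fun s hs => ?_
    have has : a ∉ s := fun has => ha (Finset.mem_powerset.mp hs has)
    set F := (2⁻¹ : ℂ) • (1 + Z a)
    have hXW : X a * h.xWord s = h.xWord s * X a := h.commute_X_xWord has
    have hQX : h.zProj u * X a = X a * h.zProj u := (h.commute_X_zProj ha).eq.symm
    rw [h.zProj_insert ha, h.xWord_insert has]
    calc h.xWord s * (F * h.zProj u) * h.xWord s
          + X a * h.xWord s * (F * h.zProj u) * (X a * h.xWord s)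
        = h.xWord s * (F * h.zProj u) * h.xWord s
          + X a * h.xWord s * F * (h.zProj u * X a) * h.xWord s := by noncomm_ring
      _ = h.xWord s * ((F + X a * F * X a) * h.zProj u) * h.xWord s := by
        rw [hQX, hXW]; noncomm_ring
      _ = h.xWord s * h.zProj u * h.xWord s := by
        rw [h.half_one_add_Z_add_X_mul_mul_X, one_mul]

section WordMatrix

variable {κ : Type*} (B : Matrix m κ ℂ)

noncomputable def wordMatrix : Matrix m (Finset ι × κ) ℂ :=
  of fun i sk => (h.xWord sk.1 * B) i sk.2

omit [DecidableEq ι] in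
theorem mul_wordMatrix_apply (A : Matrix m m ℂ) (i : m) (s : Finset ι) (k : κ) :
    (A * h.wordMatrix B) i (s, k) = (A * h.xWord s * B) i k := by
  rw [Matrix.mul_assoc]
  rfl

theorem conjTranspose_xWord_mul (s : Finset ι) : (h.xWord s * B)ᴴ = Bᴴ * h.xWord s := by
  rw [conjTranspose_mul, (h.isHermitian_xWord s).eq]

variable [Fintype ι]

theorem conjTranspose_mul_xWord_mul_eq_zero (hPB : h.zProj .univ * B = B) {u : Finset ι}
    (hu : u.Nonempty) : Bᴴ * h.xWord u * B = 0 := by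
  obtain ⟨j, hj⟩ := hu
  have hBP : Bᴴ * h.zProj .univ = Bᴴ := by
    rw [← (h.isStarProjection_zProj .univ).isSelfAdjoint.star_eq, star_eq_conjTranspose,
      ← conjTranspose_mul, hPB]
  calc Bᴴ * h.xWord u * B = Bᴴ * h.zProj .univ * h.xWord u * (h.zProj .univ * B) := by
        rw [hBP, hPB]
    _ = Bᴴ * (h.zProj .univ * h.xWord u * h.zProj .univ) * B := by
        simp only [Matrix.mul_assoc]
    _ = 0 := by
        rw [h.zProj_mul_xWord_mul_zProj hj (Finset.mem_univ j), Matrix.mul_zero, Matrix.zero_mul]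

theorem X_mul_wordMatrix [Fintype κ] [DecidableEq κ] (j : ι) :
    X j * h.wordMatrix B = h.wordMatrix B * (stdPauliX j ⊗ₖ (1 : Matrix κ κ ℂ)) := by
  ext i ⟨s, k⟩
  rw [mul_wordMatrix_apply, h.X_mul_xWord]
  simp [wordMatrix, mul_apply, stdPauliX, one_apply, Fintype.sum_prod_type]

theorem Z_mul_wordMatrix [Fintype κ] [DecidableEq κ] (hPB : h.zProj .univ * B = B) (j : ι) :
    Z j * h.wordMatrix B = h.wordMatrix B * (stdPauliZ j ⊗ₖ (1 : Matrix κ κ ℂ)) := by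
  have hZB : Z j * B = B := by
    rw [← hPB, ← Matrix.mul_assoc, h.Z_mul_zProj (Finset.mem_univ j)]
  ext i ⟨s, k⟩
  rw [mul_wordMatrix_apply, h.Z_mul_xWord, Matrix.smul_mul, Matrix.mul_assoc, hZB]
  simp [wordMatrix, mul_apply, stdPauliZ, one_apply, Fintype.sum_prod_type, diagonal_apply]

theorem conjTranspose_wordMatrix_mul_wordMatrix [DecidableEq κ] (hBB : Bᴴ * B = 1)
    (hPB : h.zProj .univ * B = B) : (h.wordMatrix B)ᴴ * h.wordMatrix B = 1 := by
  ext ⟨s, k⟩ ⟨t, l⟩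
  have hentry : ((h.wordMatrix B)ᴴ * h.wordMatrix B) (s, k) (t, l) =
      (Bᴴ * h.xWord (s ∆ t) * B) k l := by
    rw [← h.xWord_mul_xWord, ← Matrix.mul_assoc, ← h.conjTranspose_xWord_mul, Matrix.mul_assoc]
    rfl
  rw [hentry]
  by_cases hst : s = t
  · simp [hst, h.xWord_empty, hBB, one_apply]
  · have hu : (s ∆ t).Nonempty := Finset.nonempty_iff_ne_empty.mpr (symmDiff_eq_bot.not.mpr hst)
    simp [h.conjTranspose_mul_xWord_mul_eq_zero B hPB hu, one_apply, hst]

theorem wordMatrix_mul_conjTranspose_wordMatrix [Fintype κ] (hBP : B * Bᴴ = h.zProj .univ) :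
    h.wordMatrix B * (h.wordMatrix B)ᴴ = 1 :=
  calc h.wordMatrix B * (h.wordMatrix B)ᴴ = ∑ s, (h.xWord s * B) * (h.xWord s * B)ᴴ := by
        ext i i'
        simp only [mul_apply, Matrix.sum_apply, Fintype.sum_prod_type, conjTranspose_apply,
          wordMatrix, of_apply]
    _ = ∑ s, h.xWord s * h.zProj .univ * h.xWord s := by
        simp only [h.conjTranspose_xWord_mul, ← hBP, Matrix.mul_assoc]
    _ = 1 := by simpa using h.sum_xWord_mul_zProj_mul_xWord .univ

end WordMatrix

theorem exists_isometry_stdPauli [Fintype ι] :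
    ∃ (r : ℕ) (V : Matrix m (Finset ι × Fin r) ℂ), Vᴴ * V = 1 ∧ V * Vᴴ = 1 ∧
      (∀ j, X j * V = V * (stdPauliX j ⊗ₖ (1 : Matrix (Fin r) (Fin r) ℂ))) ∧
      (∀ j, Z j * V = V * (stdPauliZ j ⊗ₖ (1 : Matrix (Fin r) (Fin r) ℂ))) := by
  obtain ⟨r, B, hBB, hBP⟩ := exists_isometry_of_isStarProjection (h.isStarProjection_zProj .univ)
  have hPB : h.zProj .univ * B = B := by rw [← hBP, Matrix.mul_assoc, hBB, Matrix.mul_one]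
  exact ⟨r, h.wordMatrix B, h.conjTranspose_wordMatrix_mul_wordMatrix B hBB hPB,
    h.wordMatrix_mul_conjTranspose_wordMatrix B hBP, h.X_mul_wordMatrix B,
    h.Z_mul_wordMatrix B hPB⟩

theorem exists_unitary_stdPauli_of_card_eq [Fintype ι]
    (hcard : Fintype.card m = 2 ^ Fintype.card ι) :
    ∃ V : Matrix m (Finset ι) ℂ, Vᴴ * V = 1 ∧ V * Vᴴ = 1 ∧
      (∀ j, X j * V = V * stdPauliX j) ∧ (∀ j, Z j * V = V * stdPauliZ j) := by
  obtain ⟨r, V, hV₁, hV₂, hXV, hZV⟩ := h.exists_isometry_stdPauli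
  have hr : r = 1 := by
    have := Matrix.square_of_invertible _ _ hV₂ hV₁
    simp only [hcard, Fintype.card_prod, Fintype.card_finset, Fintype.card_fin] at this
    exact (Nat.mul_eq_left (by positivity)).mp this.symm
  subst hr
  let ε := (Equiv.prodUnique (Finset ι) (Fin 1)).symm
  have hid : Function.Bijective (id : m → m) := Function.bijective_id
  have transfer : ∀ (A : Matrix m m ℂ) (S : Matrix (Finset ι) (Finset ι) ℂ),
      A * V = V * (S ⊗ₖ (1 : Matrix (Fin 1) (Fin 1) ℂ)) →
        A * V.submatrix id ε = V.submatrix id ε * S := by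
    intro A S hAS
    have hS : (S ⊗ₖ (1 : Matrix (Fin 1) (Fin 1) ℂ)).submatrix ε ε = S := by ext; simp [ε]
    rw [← submatrix_id_id A, ← submatrix_mul _ _ _ _ _ hid, hAS, ← submatrix_mul_equiv _ _ _ ε, hS]
  refine ⟨V.submatrix id ε, ?_, ?_, fun j => transfer _ _ (hXV j), fun j => transfer _ _ (hZV j)⟩
  · rw [conjTranspose_submatrix, ← submatrix_mul _ _ _ _ _ hid, hV₁, submatrix_one_equiv]
  · rw [conjTranspose_submatrix, submatrix_mul_equiv, hV₂, submatrix_id_id]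

theorem exists_intertwiner_of_card_eq [Fintype ι] (hcard : Fintype.card m = 2 ^ Fintype.card ι)
    {m' : Type*} [Fintype m'] [DecidableEq m'] {X' Z' : ι → Matrix m' m' ℂ}
    (h' : IsPauliFamily X' Z') :
    ∃ (r : ℕ) (W : Matrix m' (m × Fin r) ℂ), Wᴴ * W = 1 ∧ W * Wᴴ = 1 ∧
      (∀ j, X' j * W = W * (X j ⊗ₖ (1 : Matrix (Fin r) (Fin r) ℂ))) ∧
      (∀ j, Z' j * W = W * (Z j ⊗ₖ (1 : Matrix (Fin r) (Fin r) ℂ))) := by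
  obtain ⟨V, hV₁, hV₂, hXV, hZV⟩ := h.exists_unitary_stdPauli_of_card_eq hcard
  obtain ⟨r, V', hV'₁, hV'₂, hXV', hZV'⟩ := h'.exists_isometry_stdPauli
  set I : Matrix (Fin r) (Fin r) ℂ := 1
  have compose : ∀ (A' : Matrix m' m' ℂ) (S : Matrix (Finset ι) (Finset ι) ℂ) (A : Matrix m m ℂ),
      A' * V' = V' * (S ⊗ₖ I) →
      A * V = V * S → A' * (V' * (Vᴴ ⊗ₖ I)) = V' * (Vᴴ ⊗ₖ I) * (A ⊗ₖ I) := by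
    intro A' S A hA' hA
    have hS : S * Vᴴ = Vᴴ * A := by
      rw [← Matrix.one_mul (S * Vᴴ), ← hV₁, Matrix.mul_assoc, ← Matrix.mul_assoc V, ← hA,
        Matrix.mul_assoc, hV₂, Matrix.mul_one]
    rw [← Matrix.mul_assoc, hA', Matrix.mul_assoc, Matrix.mul_assoc, ← mul_kronecker_mul,
      ← mul_kronecker_mul, hS, Matrix.mul_one]
  refine ⟨r, V' * (Vᴴ ⊗ₖ I), ?_, ?_, fun j => compose _ _ _ (hXV' j) (hXV j),
    fun j => compose _ _ _ (hZV' j) (hZV j)⟩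
  · rw [conjTranspose_mul, conjTranspose_kronecker, conjTranspose_conjTranspose, conjTranspose_one,
      Matrix.mul_assoc, ← Matrix.mul_assoc V'ᴴ, hV'₁, Matrix.one_mul, ← mul_kronecker_mul, hV₂,
      Matrix.mul_one, one_kronecker_one]
  · rw [conjTranspose_mul, conjTranspose_kronecker, conjTranspose_conjTranspose, conjTranspose_one,
      Matrix.mul_assoc, ← Matrix.mul_assoc (Vᴴ ⊗ₖ I), ← mul_kronecker_mul, hV₁, Matrix.mul_one,
      one_kronecker_one, Matrix.one_mul, hV'₂]

end IsPauliFamily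

section MajoranaPairs

variable {m : Type*} [Fintype m] [DecidableEq m]

omit [DecidableEq m] in
theorem isHermitian_I_smul_mul {A B : Matrix m m ℂ} (hA : A.IsHermitian) (hB : B.IsHermitian)
    (hAB : A * B = -(B * A)) : (Complex.I • (A * B)).IsHermitian := by
  rw [IsHermitian, conjTranspose_smul, conjTranspose_mul, hA.eq, hB.eq,
    show B * A = -(A * B) by rw [hAB, neg_neg], Complex.star_def, Complex.conj_I, smul_neg,
    neg_smul, neg_neg]

theorem I_smul_mul_mul_self {A B : Matrix m m ℂ} (hAB : A * B = -(B * A)) (hA : A * A = 1)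
    (hB : B * B = 1) : Complex.I • (A * B) * (Complex.I • (A * B)) = 1 := by
  rw [smul_mul_smul, Complex.I_mul_I, mul_mul_self_eq_neg_one_of_anticommute hAB hA hB,
    neg_one_smul, neg_neg]

theorem IsPauliFamily.of_majorana {ι : Type*} (c : ι → Fin 3 → Matrix m m ℂ)
    (herm : ∀ j a, (c j a).IsHermitian) (sq : ∀ j a, c j a * c j a = 1)
    (anti : ∀ j a k b, (j, a) ≠ (k, b) → c j a * c k b = -(c k b * c j a)) :
    IsPauliFamily (fun j => Complex.I • (c j 1 * c j 2))
      (fun j => Complex.I • (c j 0 * c j 1)) := by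
  have same : ∀ j {a b : Fin 3}, a ≠ b → c j a * c j b = -(c j b * c j a) :=
    fun j a b hab => anti j a j b fun h => hab (Prod.ext_iff.mp h).2
  have other : ∀ {j k} (a b : Fin 3), j ≠ k → c j a * c k b = -(c k b * c j a) :=
    fun a b hjk => anti _ a _ b fun h => hjk (Prod.ext_iff.mp h).1
  have pairs : ∀ {j k} (a b a' b' : Fin 3), j ≠ k →
      Commute (Complex.I • (c j a * c j b)) (Complex.I • (c k a' * c k b')) := fun a b a' b' hjk =>
    (((commute_mul_of_anticommute_s14 (other a a' hjk) (other a b' hjk)).mul_left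
      (commute_mul_of_anticommute_s14 (other b a' hjk) (other b b' hjk))).smul_left _).smul_right _
  exact {
    isHermitian_X := fun j => isHermitian_I_smul_mul (herm j 1) (herm j 2) (same j (by decide))
    isHermitian_Z := fun j => isHermitian_I_smul_mul (herm j 0) (herm j 1) (same j (by decide))
    X_mul_self := fun j => I_smul_mul_mul_self (same j (by decide)) (sq j 1) (sq j 2)
    Z_mul_self := fun j => I_smul_mul_mul_self (same j (by decide)) (sq j 0) (sq j 1)
    X_mul_Z := fun j => by
      rw [smul_mul_smul, smul_mul_smul, mul_mul_mul_eq_neg_of_anticommute (same j (by decide))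
        (same j (by decide)) (same j (by decide)), smul_neg]
    commute_X := fun _ _ hjk => pairs _ _ _ _ hjk
    commute_Z := fun _ _ hjk => pairs _ _ _ _ hjk
    commute_X_Z := fun _ _ hjk => pairs _ _ _ _ hjk }

theorem majorana_Y_eq_I_smul_X_mul_Z {ι : Type*} (c : ι → Fin 3 → Matrix m m ℂ)
    (sq : ∀ j a, c j a * c j a = 1)
    (anti : ∀ j a k b, (j, a) ≠ (k, b) → c j a * c k b = -(c k b * c j a)) (j : ι) :
    Complex.I • (c j 0 * c j 2) =
      Complex.I • ((Complex.I • (c j 1 * c j 2)) * (Complex.I • (c j 0 * c j 1))) := by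
  have same : ∀ {a b : Fin 3}, a ≠ b → c j a * c j b = -(c j b * c j a) :=
    fun hab => anti j _ j _ fun h => hab (Prod.ext_iff.mp h).2
  rw [smul_mul_smul, Complex.I_mul_I, mul_mul_mul_eq_neg_of_anticommute (same (by decide))
    (same (by decide)) (same (by decide)), mul_assoc, ← mul_assoc (c j 1), sq, one_mul,
    smul_neg, neg_smul, neg_neg, one_smul]

end MajoranaPairs

theorem pauliString_mul_eq_mul_kronecker {n D D' r : ℕ} {X Y Z : Fin n → Matrix (Fin D) (Fin D) ℂ}
    {X' Y' Z' : Fin n → Matrix (Fin D') (Fin D') ℂ} {W : Matrix (Fin D') (Fin D × Fin r) ℂ}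
    (hXW : ∀ j, X' j * W = W * (X j ⊗ₖ (1 : Matrix (Fin r) (Fin r) ℂ)))
    (hZW : ∀ j, Z' j * W = W * (Z j ⊗ₖ (1 : Matrix (Fin r) (Fin r) ℂ)))
    (hY : ∀ j, Y j = Complex.I • (X j * Z j)) (hY' : ∀ j, Y' j = Complex.I • (X' j * Z' j))
    (a : Fin n → Fin 4) :
    pauliString X' Y' Z' a * W = W * (pauliString X Y Z a ⊗ₖ (1 : Matrix (Fin r) (Fin r) ℂ)) := by
  refine list_prod_map_mul_eq_mul_kronecker _ fun j _ => ?_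
  split_ifs
  · exact hXW j
  · rw [hY, hY', Matrix.smul_mul, Matrix.mul_assoc, hZW, ← Matrix.mul_assoc, hXW, Matrix.mul_assoc,
      ← mul_kronecker_mul, Matrix.one_mul, smul_kronecker, Matrix.mul_smul]
  · exact hZW j
  · rw [Matrix.one_mul, one_kronecker_one, Matrix.mul_one]

/-- For even `n = 2p`, let `H_qb = Σ_a α_a P_a` be an `n`-qubit
Hamiltonian and let `H` be the `3n/2`-fermion Hamiltonian obtained by replacing each Pauli
factor via `X_j ↦ i c_{y,j}c_{z,j}`, `Y_j ↦ i c_{x,j}c_{z,j}`, `Z_j ↦ i c_{x,j}c_{y,j}`.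
Then `H` is unitarily equivalent to `H_qb ⊗ I` with `I` on an auxiliary space of dimension
`2^{n/2}`; in particular `H` and `H_qb` have the same spectrum (with multiplicities of
`H_qb` multiplied by `2^{n/2}`). -/
theorem pauli_to_fermion_spectrum {p : ℕ}
    (X Y Z : Fin (2 * p) → Matrix (Fin (2 ^ (2 * p))) (Fin (2 ^ (2 * p))) ℂ)
    (cc : Fin (2 * p) → Fin 3 → Matrix (Fin (2 ^ (3 * p))) (Fin (2 ^ (3 * p))) ℂ)
    -- Pauli relations
    (hXherm : ∀ j, (X j).IsHermitian) (hZherm : ∀ j, (Z j).IsHermitian)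
    (hX2 : ∀ j, X j * X j = 1) (hZ2 : ∀ j, Z j * Z j = 1)
    (hXZ : ∀ j, X j * Z j = -(Z j * X j))
    (hY : ∀ j, Y j = Complex.I • (X j * Z j))
    (hXX : ∀ j k, j ≠ k → X j * X k = X k * X j)
    (hZZ : ∀ j k, j ≠ k → Z j * Z k = Z k * Z j)
    (hXZcomm : ∀ j k, j ≠ k → X j * Z k = Z k * X j)
    -- Majorana relations for the 3n operators c_{x,j}, c_{y,j}, c_{z,j}
    (hccherm : ∀ j a, (cc j a).IsHermitian)
    (hcc2 : ∀ j a, cc j a * cc j a = 1)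
    (hccanti : ∀ j a k b, (j, a) ≠ (k, b) → cc j a * cc k b = -(cc k b * cc j a))
    -- the Hamiltonians
    (α : (Fin (2 * p) → Fin 4) → ℂ)
    (Hqb : Matrix (Fin (2 ^ (2 * p))) (Fin (2 ^ (2 * p))) ℂ)
    (Hf : Matrix (Fin (2 ^ (3 * p))) (Fin (2 ^ (3 * p))) ℂ)
    (hHqb : Hqb = ∑ a : Fin (2 * p) → Fin 4, α a • pauliString X Y Z a)
    (hHf : Hf = ∑ a : Fin (2 * p) → Fin 4, α a • fermiString cc a)
    (e : Fin (2 ^ (2 * p)) × Fin (2 ^ p) ≃ Fin (2 ^ (3 * p))) :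
    (∃ U ∈ Matrix.unitaryGroup (Fin (2 ^ (3 * p))) ℂ,
      Hf = U * (Matrix.reindex e e
        (Hqb ⊗ₖ (1 : Matrix (Fin (2 ^ p)) (Fin (2 ^ p)) ℂ))) * star U) ∧
    spectrum ℂ Hf = spectrum ℂ Hqb := by
  have hqb : IsPauliFamily X Z := ⟨hXherm, hZherm, hX2, hZ2, hXZ, hXX, hZZ, hXZcomm⟩
  obtain ⟨r, W, hW₁, hW₂, hXW, hZW⟩ :=
    hqb.exists_intertwiner_of_card_eq (by simp) (.of_majorana cc hccherm hcc2 hccanti)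
  obtain rfl : r = 2 ^ p := by
    have hcard := Matrix.square_of_invertible _ _ hW₂ hW₁
    rw [Fintype.card_fin, Fintype.card_prod, Fintype.card_fin, Fintype.card_fin,
      show 3 * p = 2 * p + p by ring, pow_add] at hcard
    exact (Nat.eq_of_mul_eq_mul_left (by positivity) hcard).symm
  have hHW : Hf * W = W * (Hqb ⊗ₖ (1 : Matrix (Fin (2 ^ p)) (Fin (2 ^ p)) ℂ)) := by
    simp only [hHf, hHqb, Matrix.sum_mul, Matrix.mul_sum, Matrix.smul_mul, Matrix.mul_smul,
      sum_kronecker, smul_kronecker]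
    exact Finset.sum_congr rfl fun a _ => congrArg _ (pauliString_mul_eq_mul_kronecker hXW hZW hY
      (majorana_Y_eq_I_smul_X_mul_Z cc hcc2 hccanti) a)
  have hU : W.submatrix id e.symm ∈ unitaryGroup (Fin (2 ^ (3 * p))) ℂ := by
    rw [mem_unitaryGroup_iff, star_eq_conjTranspose, conjTranspose_submatrix, submatrix_mul_equiv,
      hW₂, submatrix_id_id]
  have hconj :
      Hf = W.submatrix id e.symm * reindex e e (Hqb ⊗ₖ 1) * star (W.submatrix id e.symm) := by
    rw [reindex_apply, star_eq_conjTranspose, conjTranspose_submatrix, submatrix_mul_equiv,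
      submatrix_mul_equiv, submatrix_id_id, ← hHW, Matrix.mul_assoc, hW₂, Matrix.mul_one]
  refine ⟨⟨_, hU, hconj⟩, ?_⟩
  rw [hconj, Unitary.spectrum_star_right_conjugate (U := ⟨_, hU⟩)]
  exact (AlgEquiv.spectrum_eq (reindexAlgEquiv ℂ ℂ e) _).trans (spectrum_kronecker_one Hqb)
end
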